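/- Let λ > 0 and define g(x) = (φ(x−λ) − φ(−x−λ))/(Φ(x−λ) + Φ(−x−λ)) for x ∈ ℝ, where φ, Φ are the standard normal pdf and cdf. Then for all x ≥ 0, 0 ≤ g(x) ≤ (1/√(2π))/(2Φ(−λ)). -/
import Mathlib


open MeasureTheory

/-- Standard normal pdf. -/
noncomputable def stdPdf (x : ℝ) : ℝ := Real.exp (-(x ^ 2) / 2) / Real.sqrt (2 * Real.pi)

/-- Standard normal cdf. -/
noncomputable def stdCdf (x : ℝ) : ℝ := ∫ t in Set.Iic x, stdPdf t

lemma stdPdf_pos (x : ℝ) : 0 < stdPdf x := by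
  unfold stdPdf
  positivity

lemma stdPdf_le {a b : ℝ} (h : b ^ 2 ≤ a ^ 2) : stdPdf a ≤ stdPdf b := by
  unfold stdPdf
  have hs : 0 < Real.sqrt (2 * Real.pi) := Real.sqrt_pos.mpr (by positivity)
  exact (div_le_div_iff_of_pos_right hs).mpr (Real.exp_le_exp.mpr (by linarith))

lemma stdPdf_le_bound (x : ℝ) : stdPdf x ≤ 1 / Real.sqrt (2 * Real.pi) := by
  unfold stdPdf
  have hs : 0 < Real.sqrt (2 * Real.pi) := Real.sqrt_pos.mpr (by positivity)
  refine (div_le_div_iff_of_pos_right hs).mpr ?_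
  calc Real.exp (-(x ^ 2) / 2) ≤ Real.exp 0 := Real.exp_le_exp.mpr (by nlinarith [sq_nonneg x])
    _ = 1 := Real.exp_zero

lemma integrable_stdPdf : Integrable stdPdf := by
  have h : Integrable (fun x : ℝ => Real.exp (-(1/2 : ℝ) * x ^ 2)) :=
    integrable_exp_neg_mul_sq (by norm_num)
  have := h.div_const (Real.sqrt (2 * Real.pi))
  convert this using 2 with x
  unfold stdPdf
  ring_nf

lemma continuous_stdPdf : Continuous stdPdf := by
  unfold stdPdf
  fun_prop

lemma stdCdf_pos (y : ℝ) : 0 < stdCdf y := by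
  unfold stdCdf
  have h : 0 < ∫ t in Set.Ioc (y - 1) y, stdPdf t := by
    rw [← intervalIntegral.integral_of_le (by linarith)]
    apply intervalIntegral.intervalIntegral_pos_of_pos_on
    · exact integrable_stdPdf.intervalIntegrable
    · intro t _; exact stdPdf_pos t
    · linarith
  calc (0 : ℝ) < ∫ t in Set.Ioc (y - 1) y, stdPdf t := h
    _ ≤ ∫ t in Set.Iic y, stdPdf t := by
        apply setIntegral_mono_set integrable_stdPdf.integrableOn
        · exact Filter.Eventually.of_forall fun t => (stdPdf_pos t).le
        · exact HasSubset.Subset.eventuallyLE (fun t ht => ht.2)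

lemma stdCdf_sub (a b : ℝ) : stdCdf b - stdCdf a = ∫ t in a..b, stdPdf t := by
  unfold stdCdf
  exact intervalIntegral.integral_Iic_sub_Iic integrable_stdPdf.integrableOn integrable_stdPdf.integrableOn

lemma denom_ge (lam : ℝ) (hlam : 0 < lam) (x : ℝ) (hx : 0 ≤ x) :
    2 * stdCdf (-lam) ≤ stdCdf (x - lam) + stdCdf (-x - lam) := by
  have key : stdCdf (-lam) - stdCdf (-x - lam) ≤ stdCdf (x - lam) - stdCdf (-lam) := by
    rw [stdCdf_sub, stdCdf_sub]
    have hsub : (∫ t in (-x - lam)..(-lam), stdPdf t)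
        = ∫ t in (-lam)..(x - lam), stdPdf (-t - 2 * lam) := by
      have h1 : (fun t : ℝ => stdPdf (-t - 2 * lam)) = fun t => (fun u => stdPdf (-u)) (t + 2*lam) := by
        funext t; ring_nf
      rw [h1, intervalIntegral.integral_comp_add_right (fun u => stdPdf (-u)) (2*lam),
        intervalIntegral.integral_comp_neg stdPdf]
      norm_num
      ring_nf
    rw [hsub]
    apply intervalIntegral.integral_mono_on (by linarith)
    · apply Continuous.intervalIntegrable
      exact continuous_stdPdf.comp (by fun_prop)
    · exact integrable_stdPdf.intervalIntegrable
    · intro t ht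
      apply stdPdf_le
      have h1 : -lam ≤ t := ht.1
      nlinarith
  linarith

/-- The winner's curse correction term
`g(x) = (φ(x−λ) − φ(−x−λ))/(Φ(x−λ) + Φ(−x−λ))` satisfies
`0 ≤ g(x) ≤ (1/√(2π))/(2Φ(−λ))` for all `x ≥ 0`. -/
theorem stmt13 (lam : ℝ) (hlam : 0 < lam) :
    ∀ x : ℝ, 0 ≤ x →
      0 ≤ (stdPdf (x - lam) - stdPdf (-x - lam)) / (stdCdf (x - lam) + stdCdf (-x - lam)) ∧
      (stdPdf (x - lam) - stdPdf (-x - lam)) / (stdCdf (x - lam) + stdCdf (-x - lam))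
        ≤ (1 / Real.sqrt (2 * Real.pi)) / (2 * stdCdf (-lam)) := by
  intro x hx
  have hnum : 0 ≤ stdPdf (x - lam) - stdPdf (-x - lam) := by
    have := stdPdf_le (a := -x - lam) (b := x - lam) (by nlinarith)
    linarith
  have hnum2 : stdPdf (x - lam) - stdPdf (-x - lam) ≤ 1 / Real.sqrt (2 * Real.pi) := by
    have := stdPdf_le_bound (x - lam)
    have := stdPdf_pos (-x - lam)
    linarith
  have hd0 : 0 < stdCdf (x - lam) + stdCdf (-x - lam) :=
    add_pos (stdCdf_pos _) (stdCdf_pos _)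
  have hd2 : 0 < 2 * stdCdf (-lam) := by have := stdCdf_pos (-lam); linarith
  have hge := denom_ge lam hlam x hx
  constructor
  · positivity
  · calc (stdPdf (x - lam) - stdPdf (-x - lam)) / (stdCdf (x - lam) + stdCdf (-x - lam))
        ≤ (stdPdf (x - lam) - stdPdf (-x - lam)) / (2 * stdCdf (-lam)) := by
          gcongr
      _ ≤ (1 / Real.sqrt (2 * Real.pi)) / (2 * stdCdf (-lam)) := by gcongr
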